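/- arXiv:2001.03746 — 4 statements merged into one kernel-verified Lean document; each statement's English description precedes it below -/
import Mathlib

section
/- Every morphism of parasimplices has a left adjoint which is again a morphism of parasimplices: if f : ℤ → ℤ is monotone with f(x + (k+1)) = f(x) + (n+1) for all x, then the map lf : ℤ → ℤ defined by lf(μ) = min { λ ∈ ℤ : μ ≤ f(λ) } is well-defined, monotone, satisfies lf(μ + (n+1)) = lf(μ) + (k+1) for all μ, and satisfies the adjunction property lf(μ) ≤ λ ↔ μ ≤ f(λ) for all μ, λ ∈ ℤ. -/
/-! Equivariance `f (x + (k+1)) = f x + (n+1)` forces `f` to be unbounded in both directions,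
so every set `{l | μ ≤ f l}` is nonempty and bounded below and has a least element; this gives
a lower adjoint of `f`. The translations are order automorphisms, and a Galois connection
transports semiconjugacy from the upper adjoint to the lower one. -/

namespace AddConstMap

variable {G H : Type*} {a : G} {b : H}
  [AddCommGroup H] [LinearOrder H] [IsOrderedAddMonoid H] [Archimedean H]

theorem exists_le_apply [AddMonoid G] (f : AddConstMap G H a b) (hb : 0 < b) (y : H) :
    ∃ x, y ≤ f x := by
  obtain ⟨m, hm⟩ := Archimedean.arch (y - f 0) hb
  exact ⟨m • a, by rw [AddConstMapClass.map_nsmul_const]; exact sub_le_iff_le_add'.mp hm⟩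

theorem exists_apply_lt [AddGroup G] (f : AddConstMap G H a b) (hb : 0 < b) (y : H) :
    ∃ x, f x < y := by
  obtain ⟨m, hm⟩ := exists_lt_nsmul hb (f 0 - y)
  exact ⟨0 - m • a, by rw [AddConstMapClass.map_sub_nsmul]; exact sub_lt_comm.mp hm⟩

end AddConstMap

theorem Monotone.exists_galoisConnection_of_unbounded {f : ℤ → ℤ} (hf : Monotone f)
    (h_above : ∀ y, ∃ x, y ≤ f x) (h_below : ∀ y, ∃ x, f x < y) :
    ∃ l : ℤ → ℤ, GaloisConnection l f := by
  have h_least (y : ℤ) : ∃ x, IsLeast {x | y ≤ f x} x := by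
    obtain ⟨x₀, hx₀⟩ := h_below y
    have h_bdd : ∀ x, y ≤ f x → x₀ ≤ x := fun x hx => (hf.reflect_lt (hx₀.trans_le hx)).le
    exact Int.exists_least_of_bdd ⟨x₀, h_bdd⟩ (h_above y)
  choose l hl using h_least
  exact ⟨l, fun y x => ⟨fun h => (hl y).1.trans (hf h), fun h => (hl y).2 h⟩⟩

theorem GaloisConnection.semiconj_l {α β : Type*} [PartialOrder α] [Preorder β]
    {l : β → α} {u : α → β} (gc : GaloisConnection l u) {ea : α ≃o α} {eb : β ≃o β}
    (h : Function.Semiconj u ea eb) : Function.Semiconj l eb ea := fun y =>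
  eq_of_forall_ge_iff fun x => by
    rw [gc, ← ea.le_symm_apply, gc, ← eb.le_iff_le (x := y), ← h.eq, ea.apply_symm_apply]

/-- Every morphism of parasimplices has a left adjoint which is again a morphism of
parasimplices. -/
theorem parasimplex_left_adjoint (n k : ℕ) (f : ℤ → ℤ) (hmono : Monotone f)
    (heq : ∀ x : ℤ, f (x + ((k : ℤ) + 1)) = f x + ((n : ℤ) + 1)) :
    ∃ lf : ℤ → ℤ,
      (∀ μ : ℤ, IsLeast {l : ℤ | μ ≤ f l} (lf μ)) ∧
      Monotone lf ∧
      (∀ μ : ℤ, lf (μ + ((n : ℤ) + 1)) = lf μ + ((k : ℤ) + 1)) ∧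
      (∀ μ l : ℤ, lf μ ≤ l ↔ μ ≤ f l) := by
  let F : AddConstMap ℤ ℤ ((k : ℤ) + 1) ((n : ℤ) + 1) := ⟨f, heq⟩
  have hn : (0 : ℤ) < n + 1 := by positivity
  obtain ⟨lf, gc⟩ := hmono.exists_galoisConnection_of_unbounded
    (F.exists_le_apply hn) (F.exists_apply_lt hn)
  exact ⟨lf, fun μ => gc.isLeast_l, gc.monotone_l,
    gc.semiconj_l (ea := .addRight _) (eb := .addRight _) heq, gc⟩
end

section
/- The left and right adjoints of a parasimplex morphism are related by the paracyclic translation: for every monotone f : ℤ → ℤ with f(x + (k+1)) = f(x) + (n+1), and with lf(μ) = min { λ : μ ≤ f(λ) } and rf(μ) = max { λ : f(λ) ≤ μ }, one has lf(μ + 1) - 1 = rf(μ) for all μ ∈ ℤ; equivalently t ∘ rf = lf ∘ t where t(x) = x + 1. -/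
theorem Monotone.isGreatest_sub_one_of_isLeast {f : ℤ → ℤ} (hf : Monotone f) {μ l : ℤ}
    (hl : IsLeast {x | μ + 1 ≤ f x} l) : IsGreatest {x | f x ≤ μ} (l - 1) := by
  refine ⟨?_, fun x hx => ?_⟩
  · show f (l - 1) ≤ μ
    by_contra h
    have : l ≤ l - 1 := hl.2 (show μ + 1 ≤ f (l - 1) by omega)
    omega
  · have hx : f x ≤ μ := hx
    by_contra h
    have : μ + 1 ≤ f x := hl.1.trans (hf (by omega))
    omega

theorem adjoints_related_by_translation_general (f lf rf : ℤ → ℤ) (hmono : Monotone f)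
    (hlf : ∀ μ : ℤ, IsLeast {l : ℤ | μ ≤ f l} (lf μ))
    (hrf : ∀ μ : ℤ, IsGreatest {l : ℤ | f l ≤ μ} (rf μ)) :
    (∀ μ : ℤ, lf (μ + 1) - 1 = rf μ) ∧
    (fun x => rf x + 1) = (fun x => lf (x + 1)) := by
  have key : ∀ μ : ℤ, lf (μ + 1) - 1 = rf μ := fun μ =>
    (hmono.isGreatest_sub_one_of_isLeast (hlf (μ + 1))).unique (hrf μ)
  exact ⟨key, funext fun x => by have := key x; omega⟩

/-- The left and right adjoints of a parasimplex morphism are related by the paracyclic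
translation: `lf (μ + 1) - 1 = rf μ`, equivalently `t ∘ rf = lf ∘ t`. -/
theorem adjoints_related_by_translation (n k : ℕ) (f lf rf : ℤ → ℤ) (hmono : Monotone f)
    (heq : ∀ x : ℤ, f (x + ((k : ℤ) + 1)) = f x + ((n : ℤ) + 1))
    (hlf : ∀ μ : ℤ, IsLeast {l : ℤ | μ ≤ f l} (lf μ))
    (hrf : ∀ μ : ℤ, IsGreatest {l : ℤ | f l ≤ μ} (rf μ)) :
    (∀ μ : ℤ, lf (μ + 1) - 1 = rf μ) ∧
    (fun x => rf x + 1) = (fun x => lf (x + 1)) :=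
  adjoints_related_by_translation_general f lf rf hmono hlf hrf
end

section
/- Decomposition of parasimplex morphisms via shifts of simplex maps: for every monotone f : ℤ → ℤ with f(x + (k+1)) = f(x) + (n+1) for all x, there exist a unique integer l and a unique monotone g : ℤ → ℤ with g(x + (k+1)) = g(x) + (n+1), satisfying 0 ≤ g(0) ≤ g(k) ≤ n, such that f(x) = g(x + l) for all x ∈ ℤ. -/
/-!
The shift is forced: `g k = g (-1) + (n + 1)`, so the conditions `0 ≤ g 0` and `g k ≤ n` say
exactly that `g` changes sign between `-1` and `0`. Hence `-l` must be the unique point where the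
monotone map `f` changes sign, which exists because `f` is unbounded in both directions.
-/

open scoped AddConstMap

theorem Monotone.existsUnique_sub_one_lt_and_le {α : Type*} [LinearOrder α] {f : ℤ → α}
    (hf : Monotone f) {c : α} (hlt : ∃ x, f x < c) (hle : ∃ x, c ≤ f x) :
    ∃! m : ℤ, f (m - 1) < c ∧ c ≤ f m := by
  obtain ⟨a, ha⟩ := hlt
  have hbdd : ∀ z, c ≤ f z → a ≤ z := fun z hz =>
    le_of_lt (hf.reflect_lt (ha.trans_le hz))
  obtain ⟨m, hm, hleast⟩ := Int.exists_least_of_bdd ⟨a, hbdd⟩ hle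
  refine ⟨m, ⟨lt_of_not_ge fun h => by linarith [hleast _ h], hm⟩, ?_⟩
  rintro m' ⟨hm'₁, hm'₂⟩
  refine le_antisymm ?_ (hleast _ hm'₂)
  by_contra! h
  exact (hm'₁.trans_le (hm.trans (hf (by omega)))).false

theorem AddConstMap.exists_neg_and_exists_nonneg {G : Type*} [AddGroup G] {a : G} {b : ℤ}
    (f : G →+c[a, b] ℤ) (hb : 0 < b) : (∃ x, f x < 0) ∧ ∃ x, 0 ≤ f x := by
  have hscale : |f 0| ≤ |f 0| * b := le_mul_of_one_le_right (abs_nonneg _) hb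
  refine ⟨⟨(-(|f 0| + 1)) • a, ?_⟩, ⟨|f 0| • a, ?_⟩⟩ <;>
    rw [AddConstMapClass.map_zsmul_const, smul_eq_mul]
  · linarith [le_abs_self (f 0)]
  · linarith [neg_abs_le (f 0)]

/-- Every parasimplex morphism decomposes uniquely as a shift of a morphism coming from
the simplex category (i.e. one with `0 ≤ g 0 ≤ g k ≤ n`). -/
theorem parasimplex_shift_decomposition (n k : ℕ) (f : ℤ → ℤ) (hmono : Monotone f)
    (heq : ∀ x : ℤ, f (x + ((k : ℤ) + 1)) = f x + ((n : ℤ) + 1)) :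
    ∃! p : ℤ × (ℤ → ℤ),
      Monotone p.2 ∧ (∀ x : ℤ, p.2 (x + ((k : ℤ) + 1)) = p.2 x + ((n : ℤ) + 1)) ∧
      0 ≤ p.2 0 ∧ p.2 0 ≤ p.2 (k : ℤ) ∧ p.2 (k : ℤ) ≤ (n : ℤ) ∧
      ∀ x : ℤ, f x = p.2 (x + p.1) := by
  have hcross : ∀ m, f (k + m) ≤ n ↔ f (m - 1) < 0 := fun m => by
    have := heq (m - 1)
    rw [show m - 1 + (k + 1) = k + m by ring] at this
    omega
  let F : ℤ →+c[(k : ℤ) + 1, (n : ℤ) + 1] ℤ := ⟨f, heq⟩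
  obtain ⟨hneg, hnonneg⟩ := F.exists_neg_and_exists_nonneg (by positivity)
  obtain ⟨m, ⟨hm₁, hm₂⟩, hm_unique⟩ := hmono.existsUnique_sub_one_lt_and_le hneg hnonneg
  refine ⟨(-m, fun x => f (x + m)), ⟨fun x y hxy => hmono (by omega),
    fun x => (congrArg f (add_right_comm ..)).trans (heq _), by simpa using hm₂, hmono (by omega),
    (hcross m).2 hm₁, fun x => by simp⟩, ?_⟩
  rintro ⟨l, g⟩ ⟨-, -, hg₀, -, hgk, hfg⟩
  obtain rfl : g = fun x => f (x - l) := funext fun x => by rw [hfg, sub_add_cancel]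
  have hl : -l = m := hm_unique (-l)
    ⟨(hcross (-l)).1 (by simpa [sub_eq_add_neg] using hgk), by simpa using hg₀⟩
  obtain rfl : l = -m := by omega
  simp
end

section
/- The injectivization map is an order isomorphism onto injective morphisms: for n, k ≥ 0, the assignment sending a parasimplex morphism f from Λ_k to Λ_n (monotone, f(x+(k+1)) = f(x)+(n+1)) with coordinates (f(0), …, f(k)) to the morphism from Λ_k to Λ_{n+k+1} with coordinates (f(0), f(1)+1, …, f(k)+k), is a well-defined, order-preserving bijection from the set of all morphisms Λ_k → Λ_n onto the set of injective morphisms Λ_k → Λ_{n+k+1}, whose inverse is also order-preserving. -/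
/-- `f` is a morphism of parasimplices from `Λ_k` to `Λ_m`. -/
def IsPara (m k : ℕ) (f : ℤ → ℤ) : Prop :=
  Monotone f ∧ ∀ x : ℤ, f (x + ((k : ℤ) + 1)) = f x + ((m : ℤ) + 1)

/-!
Injectivization is `f ↦ f + id`. On maps `ℤ → ℤ`, adding the identity is a bijection from
monotone maps onto strictly monotone ones (i.e. injective monotone ones), with inverse
`g ↦ g - id`; it turns the shift `f (x + k + 1) = f x + n + 1` into
`g (x + k + 1) = g x + (n + k + 1) + 1`, and it preserves and reflects the pointwise order
because both sides move by the same amount `x`.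
-/

theorem StrictMono.monotone_sub_id {g : ℤ → ℤ} (hg : StrictMono g) :
    Monotone fun x => g x - x :=
  monotone_int_of_le_succ fun x => by
    have := hg (Int.lt_succ x)
    omega

theorem Monotone.strictMono_add_id {f : ℤ → ℤ} (hf : Monotone f) :
    StrictMono fun x => f x + x :=
  fun x y hxy => by
    have := hf hxy.le
    dsimp only
    omega

namespace IsPara

variable {n k : ℕ}

theorem add_id {f : ℤ → ℤ} (hf : IsPara n k f) :
    IsPara (n + k + 1) k fun x => f x + x := by
  refine ⟨hf.1.strictMono_add_id.monotone, fun x => ?_⟩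
  have := hf.2 x
  push_cast
  omega

theorem injective_add_id {f : ℤ → ℤ} (hf : IsPara n k f) :
    Function.Injective fun x => f x + x :=
  hf.1.strictMono_add_id.injective

theorem sub_id {g : ℤ → ℤ} (hg : IsPara (n + k + 1) k g) (hinj : Function.Injective g) :
    IsPara n k fun x => g x - x := by
  refine ⟨(hg.1.strictMono_of_injective hinj).monotone_sub_id, fun x => ?_⟩
  have := hg.2 x
  push_cast at this
  dsimp only
  omega

end IsPara

def injectivization (n k : ℕ) :
    {f : ℤ → ℤ // IsPara n k f} ≃o
      {g : ℤ → ℤ // IsPara (n + k + 1) k g ∧ Function.Injective g} where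
  toFun f := ⟨fun x => f.1 x + x, f.2.add_id, f.2.injective_add_id⟩
  invFun g := ⟨fun x => g.1 x - x, g.2.1.sub_id g.2.2⟩
  left_inv f := by ext x; simp
  right_inv g := by ext x; simp
  map_rel_iff' {f f'} := by
    simp only [Equiv.coe_fn_mk, Subtype.mk_le_mk, Pi.le_def, add_le_add_iff_right]
    rfl

/-- The injectivization map, sending `f : Λ_k → Λ_n` to the morphism `Λ_k → Λ_{n+k+1}`
with coordinates `(f 0, f 1 + 1, …, f k + k)`, is an order isomorphism onto the
injective morphisms. -/
theorem injectivization_order_iso (n k : ℕ) :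
    ∃ e : {f : ℤ → ℤ // IsPara n k f} ≃
        {g : ℤ → ℤ // IsPara (n + k + 1) k g ∧ Function.Injective g},
      (∀ f : {f : ℤ → ℤ // IsPara n k f}, ∀ i : ℕ, i ≤ k →
        (e f).1 ((i : ℤ)) = f.1 ((i : ℤ)) + (i : ℤ)) ∧
      (∀ f f' : {f : ℤ → ℤ // IsPara n k f},
        (∀ x : ℤ, f.1 x ≤ f'.1 x) ↔ ∀ x : ℤ, (e f).1 x ≤ (e f').1 x) :=
  ⟨(injectivization n k).toEquiv, fun _ _ _ => rfl, fun f f' =>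
    ((injectivization n k).le_iff_le (x := f) (y := f')).symm⟩
end
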